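/- If b⁽¹⁾ and b⁽²⁾ both minimize the weighted lasso objective f over ℝ^m, then A b⁽¹⁾ = A b⁽²⁾. Consequently the fitted residual y − A b is the same for all minimizers of f. -/
import Mathlib


/-!
Statement 1: if `b⁽¹⁾` and `b⁽²⁾` both minimize the weighted lasso objective
`f(b) = (2n)⁻¹ ‖y − A b‖₂² + λ ∑_k w_k |b_k|`, then `A b⁽¹⁾ = A b⁽²⁾`; consequently
the fitted residual `y − A b` is the same for all minimizers of `f`.
-/

noncomputable section

open Finset Matrix

/-- The weighted lasso objective `f(b) = (2n)⁻¹ ‖y − A b‖₂² + λ ∑_k w_k |b_k|`. -/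
def weightedLassoObj {n m : ℕ} (A : Matrix (Fin n) (Fin m) ℝ) (y : Fin n → ℝ)
    (lam : ℝ) (w : Fin m → ℝ) (b : Fin m → ℝ) : ℝ :=
  (2 * n : ℝ)⁻¹ * ∑ i, (y i - A.mulVec b i) ^ 2 + lam * ∑ k, w k * |b k|

theorem weightedLasso_fit_unique {n m : ℕ} (A : Matrix (Fin n) (Fin m) ℝ)
    (y : Fin n → ℝ) (lam : ℝ) (hlam : 0 < lam) (w : Fin m → ℝ) (hw : ∀ k, 0 ≤ w k)
    (b₁ b₂ : Fin m → ℝ)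
    (h₁ : ∀ b : Fin m → ℝ, weightedLassoObj A y lam w b₁ ≤ weightedLassoObj A y lam w b)
    (h₂ : ∀ b : Fin m → ℝ, weightedLassoObj A y lam w b₂ ≤ weightedLassoObj A y lam w b) :
    A.mulVec b₁ = A.mulVec b₂ ∧ y - A.mulVec b₁ = y - A.mulVec b₂ := by
  have key : A.mulVec b₁ = A.mulVec b₂ := by
    rcases Nat.eq_zero_or_pos n with hn | hn
    · subst hn; funext i; exact i.elim0
    · have hc : (0:ℝ) < (2 * n : ℝ)⁻¹ := by positivity
      set c : ℝ := (2 * n : ℝ)⁻¹ with hcdef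
      have hM : weightedLassoObj A y lam w b₁ = weightedLassoObj A y lam w b₂ :=
        le_antisymm (h₁ b₂) (h₂ b₁)
      set bm : Fin m → ℝ := fun k => (b₁ k + b₂ k) / 2 with hbm
      have hbm' : bm = (2:ℝ)⁻¹ • (b₁ + b₂) := by
        funext k; simp [hbm]; ring
      have hmv : ∀ i, A.mulVec bm i = (A.mulVec b₁ i + A.mulVec b₂ i) / 2 := by
        intro i
        rw [hbm', Matrix.mulVec_smul, Matrix.mulVec_add]
        simp [Pi.smul_apply]
        ring
      set S : ℝ := ∑ i, ((A.mulVec b₁ i - A.mulVec b₂ i) / 2) ^ 2 with hS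
      have hquad : ∑ i, (y i - A.mulVec bm i) ^ 2 =
          (∑ i, (y i - A.mulVec b₁ i) ^ 2 + ∑ i, (y i - A.mulVec b₂ i) ^ 2) / 2 - S := by
        rw [hS, ← Finset.sum_add_distrib, Finset.sum_div, ← Finset.sum_sub_distrib]
        refine Finset.sum_congr rfl fun i _ => ?_
        rw [hmv i]; ring
      have hpen : ∑ k, w k * |bm k| ≤
          (∑ k, w k * |b₁ k| + ∑ k, w k * |b₂ k|) / 2 := by
        rw [← Finset.sum_add_distrib, Finset.sum_div]
        refine Finset.sum_le_sum fun k _ => ?_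
        have : |bm k| ≤ (|b₁ k| + |b₂ k|) / 2 := by
          simp only [hbm]
          rw [abs_div]
          have := abs_add_le (b₁ k) (b₂ k)
          simp [abs_of_pos (by norm_num : (0:ℝ) < 2)]
          linarith
        calc w k * |bm k| ≤ w k * ((|b₁ k| + |b₂ k|) / 2) :=
              mul_le_mul_of_nonneg_left this (hw k)
          _ = (w k * |b₁ k| + w k * |b₂ k|) / 2 := by ring
      have hfbm : weightedLassoObj A y lam w bm ≤
          weightedLassoObj A y lam w b₁ - c * S := by
        have h' : weightedLassoObj A y lam w bm ≤
            (weightedLassoObj A y lam w b₁ + weightedLassoObj A y lam w b₂) / 2 - c * S := by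
          unfold weightedLassoObj
          rw [hquad]
          have := mul_le_mul_of_nonneg_left hpen hlam.le
          nlinarith [hc.le]
        rw [← hM] at h'
        linarith
      have hle := h₁ bm
      have hS0 : S ≤ 0 := by nlinarith
      have hSnn : (0:ℝ) ≤ S := Finset.sum_nonneg fun i _ => sq_nonneg _
      have hSe : S = 0 := le_antisymm hS0 hSnn
      funext i
      have hterm : ((A.mulVec b₁ i - A.mulVec b₂ i) / 2) ^ 2 = 0 := by
        have := Finset.sum_eq_zero_iff_of_nonneg
          (fun j (_ : j ∈ Finset.univ) => sq_nonneg ((A.mulVec b₁ j - A.mulVec b₂ j) / 2))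
        exact (this.mp hSe) i (Finset.mem_univ i)
      have := pow_eq_zero_iff (n := 2) (by norm_num) |>.mp hterm
      have : A.mulVec b₁ i - A.mulVec b₂ i = 0 := by
        field_simp at this; linarith
      linarith
  exact ⟨key, by rw [key]⟩
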